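/- arXiv:1512.01009 — 6 statements merged into one kernel-verified Lean document; each statement's English description precedes it below -/
import Mathlib

section
/- Let q ≠ 2 be a prime power and n ≥ 1. Let A_1,...,A_m and B_1,...,B_m be affine subspaces of the n-dimensional affine space over F_q such that A_i ∩ B_i = ∅ for all i, and A_i ∩ B_j ≠ ∅ whenever i < j. Then m ≤ q^n + 1. -/
/-!
Choose a prime `p` dividing `q - 1`; it exists because `q ≠ 2`. A nonempty affine subspace has
`q ^ d` points, so modulo `p` every cross intersection `A i ∩ B j` (`i < j`) has one point and every
`A i ∩ B i` none. Hence, with the indicator vectors `a i` of the `A i` and `b j` of the `B j` in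
`𝔽_p ^ (𝔽_q ^ n)`, the square matrix `(a i ⬝ᵥ (b (j + 1) - b j))` for `i, j < m - 1` is lower
triangular with ones on the diagonal. Its rank `m - 1` is at most the rank of the matrix with rows
`a i`, which is at most `q ^ n`.
-/

def IsAffineSubspace {F : Type*} [Field F] {n : ℕ} (S : Set (Fin n → F)) : Prop :=
  ∃ (a : Fin n → F) (U : Submodule F (Fin n → F)), S = (fun u => a + u) '' (U : Set (Fin n → F))

open Matrix

theorem Set.sum_indicator_one_mul_indicator_one {X R : Type*} [Fintype X] [Semiring R]
    (s t : Set X) : ∑ x, s.indicator (1 : X → R) x * t.indicator 1 x = Nat.card ↥(s ∩ t) := by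
  classical
  simp_rw [← Pi.mul_apply _ _ (_ : X), ← Set.inter_indicator_one, Set.indicator_apply,
    Pi.one_apply, Finset.sum_boole, Set.filter_mem_univ_eq_toFinset, Set.toFinset_card,
    Nat.card_eq_fintype_card]

theorem le_card_add_one_of_skew_cross_intersecting {K X : Type*} [Field K] [Fintype X] {m : ℕ}
    (A B : Fin m → Set X) (hdiag : ∀ i, (Nat.card ↥(A i ∩ B i) : K) = 0)
    (hcross : ∀ i j, i < j → (Nat.card ↥(A i ∩ B j) : K) = 1) :
    m ≤ Fintype.card X + 1 := by
  obtain _ | k := m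
  · omega
  let V : Matrix (Fin k) X K := of fun i => (A i.castSucc).indicator 1
  let U : Matrix X (Fin k) K :=
    of fun x j => (B j.succ).indicator 1 x - (B j.castSucc).indicator 1 x
  have hVU : ∀ i j, (V * U) i j =
      Nat.card ↥(A i.castSucc ∩ B j.succ) - Nat.card ↥(A i.castSucc ∩ B j.castSucc) := by
    intro i j
    simp only [mul_apply, V, U, of_apply, mul_sub, Finset.sum_sub_distrib,
      Set.sum_indicator_one_mul_indicator_one]
  have hlower : (V * U).IsLowerTriangular := by
    intro i j (hij : i < j)
    rw [hVU, hcross _ _ (Fin.castSucc_lt_castSucc_iff.mpr hij),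
      hcross _ _ (Fin.castSucc_lt_succ_iff.mpr hij.le), sub_self]
  have hdet : (V * U).det = 1 := by
    rw [det_of_isLowerTriangular _ hlower]
    refine Finset.prod_eq_one fun i _ => ?_
    rw [hVU, hcross _ _ Fin.castSucc_lt_succ, hdiag, sub_zero]
  calc k + 1 = (V * U).rank + 1 := by
        rw [rank_of_isUnit _ ((isUnit_iff_isUnit_det _).mpr (by simp [hdet])), Fintype.card_fin]
    _ ≤ V.rank + 1 := by grw [rank_mul_le_left V U]
    _ ≤ Fintype.card X + 1 := by grw [rank_le_card_width V]

theorem AffineSubspace.natCard_eq_pow_finrank {k V P : Type*} [Field k] [Fintype k]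
    [AddCommGroup V] [Module k V] [Finite V] [AddTorsor V P] (s : AffineSubspace k P)
    [Nonempty s] : Nat.card s = Fintype.card k ^ Module.finrank k s.direction := by
  have : Fintype s.direction := Fintype.ofFinite _
  rw [← Nat.card_congr (Equiv.vaddConst (Classical.arbitrary s)), Nat.card_eq_fintype_card,
    Module.card_eq_pow_finrank (K := k)]

theorem IsAffineSubspace.exists_eq_coe {F : Type*} [Field F] {n : ℕ} {S : Set (Fin n → F)}
    (hS : IsAffineSubspace S) : ∃ s : AffineSubspace F (Fin n → F), S = s := by
  obtain ⟨a, U, rfl⟩ := hS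
  refine ⟨AffineSubspace.mk' a U, Set.ext fun y => ?_⟩
  rw [SetLike.mem_coe, AffineSubspace.mem_mk', vsub_eq_sub]
  exact ⟨by rintro ⟨u, hu, rfl⟩; simpa using hu, fun h => ⟨y - a, h, add_sub_cancel a y⟩⟩

theorem IsAffineSubspace.natCard_inter_eq_pow {F : Type*} [Field F] [Fintype F] {n : ℕ}
    {S T : Set (Fin n → F)} (hS : IsAffineSubspace S) (hT : IsAffineSubspace T)
    (hST : (S ∩ T).Nonempty) : ∃ d, Nat.card ↥(S ∩ T) = Fintype.card F ^ d := by
  obtain ⟨s, rfl⟩ := hS.exists_eq_coe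
  obtain ⟨t, rfl⟩ := hT.exists_eq_coe
  rw [← AffineSubspace.coe_inf] at hST ⊢
  have : Nonempty ↥(s ⊓ t) := hST.to_subtype
  exact ⟨_, (s ⊓ t).natCard_eq_pow_finrank⟩

theorem stmt0_general (q n : ℕ) (hq2 : q ≠ 2)
    (F : Type) [Field F] [Fintype F] (hF : Fintype.card F = q)
    (m : ℕ) (A B : Fin m → Set (Fin n → F))
    (hA : ∀ i, IsAffineSubspace (A i)) (hB : ∀ i, IsAffineSubspace (B i))
    (hdisj : ∀ i, A i ∩ B i = ∅)
    (hcross : ∀ i j, i < j → (A i ∩ B j).Nonempty) :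
    m ≤ q ^ n + 1 := by
  have hq3 : 3 ≤ q := by have := hF ▸ Fintype.one_lt_card (α := F); omega
  set p := (q - 1).minFac
  have : Fact p.Prime := ⟨Nat.minFac_prime (by omega)⟩
  have hq1 : (q : ZMod p) = 1 := by
    exact_mod_cast (ZMod.natCast_eq_natCast_iff q 1 p).mpr
      ((Nat.modEq_iff_dvd' (by omega)).mpr (Nat.minFac_dvd _)).symm
  have hbound := le_card_add_one_of_skew_cross_intersecting (K := ZMod p) A B
    (fun i => by simp [hdisj i])
    (fun i j hij => by
      obtain ⟨d, hd⟩ := (hA i).natCard_inter_eq_pow (hB j) (hcross i j hij)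
      simp [hd, hF, hq1])
  simpa [hF] using hbound

theorem stmt0 (q n : ℕ) (hq : IsPrimePow q) (hq2 : q ≠ 2) (hn : 1 ≤ n)
    (F : Type) [Field F] [Fintype F] (hF : Fintype.card F = q)
    (m : ℕ) (A B : Fin m → Set (Fin n → F))
    (hA : ∀ i, IsAffineSubspace (A i)) (hB : ∀ i, IsAffineSubspace (B i))
    (hdisj : ∀ i, A i ∩ B i = ∅)
    (hcross : ∀ i j, i < j → (A i ∩ B j).Nonempty) :
    m ≤ q ^ n + 1 :=
  stmt0_general q n hq2 F hF m A B hA hB hdisj hcross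
end

section
/- For every prime power q and every n ≥ 1, there exists a cross-intersecting pair of families of affine subspaces (A_i, B_i)_{1≤i≤m} of F_q^n with m = (q^n - 1)/(q - 1). Hence m(n,q) ≥ (q^n - 1)/(q - 1). -/
open Projectivization
open scoped LinearAlgebra.Projectivization

theorem isAffineSubspace_preimage_singleton {F W : Type*} [Field F] [AddCommGroup W]
    [Module F W] {n : ℕ} (f : (Fin n → F) →ₗ[F] W) (β : Fin n → F) :
    IsAffineSubspace (f ⁻¹' {f β}) := by
  refine ⟨β, LinearMap.ker f, Set.ext fun x ↦ ⟨fun hx ↦ ⟨x - β, ?_, add_sub_cancel β x⟩, ?_⟩⟩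
  · simp_all
  · rintro ⟨u, hu, rfl⟩
    simp_all

section Dual

variable {K V : Type*} [Field K] [AddCommGroup V] [Module K V]

theorem Module.Dual.exists_apply_eq_zero_and_apply_eq_one {f g : Module.Dual K V}
    (h : ¬ ∃ a : K, a • f = g) : ∃ x, f x = 0 ∧ g x = 1 := by
  have hker : ¬ LinearMap.ker f ≤ LinearMap.ker g := fun hle ↦ h <| by
    rw [← Submodule.mem_span_singleton, ← Set.range_const (ι := Unit) (c := f)]
    exact mem_span_of_iInf_ker_le_ker (by simpa using hle)
  obtain ⟨x, hfx, hgx⟩ := Set.not_subset.1 hker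
  refine ⟨(g x)⁻¹ • x, ?_, ?_⟩ <;> simp_all

theorem Projectivization.nonempty_rep_preimage_zero_inter_rep_preimage_one
    {p p' : ℙ K (Module.Dual K V)} (h : p ≠ p') :
    (p.rep ⁻¹' {0} ∩ p'.rep ⁻¹' {1}).Nonempty := by
  have hnot : ¬ ∃ a : K, a • p.rep = p'.rep := by
    rw [← mk_eq_mk_iff' K _ _ p'.rep_nonzero p.rep_nonzero, mk_rep, mk_rep]
    exact Ne.symm h
  exact Module.Dual.exists_apply_eq_zero_and_apply_eq_one hnot

end Dual

theorem Projectivization.card_dual_pi (F : Type*) [Field F] [Fintype F] (n : ℕ) :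
    Nat.card (ℙ F (Module.Dual F (Fin n → F))) =
      (Fintype.card F ^ n - 1) / (Fintype.card F - 1) := by
  rw [card'', Nat.card_congr (Pi.basisFun F (Fin n)).toDualEquiv.toEquiv.symm, Nat.card_fun]
  simp

theorem stmt4_general (q n : ℕ)
    (F : Type) [Field F] [Fintype F] (hF : Fintype.card F = q) :
    ∃ (A B : Fin ((q ^ n - 1) / (q - 1)) → Set (Fin n → F)),
      (∀ i, IsAffineSubspace (A i)) ∧ (∀ i, IsAffineSubspace (B i)) ∧
      (∀ i, A i ∩ B i = ∅) ∧
      (∀ i j, i < j → (A i ∩ B j).Nonempty) := by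
  have : Finite (Module.Dual F (Fin n → F)) := Module.finite_of_finite F
  have hcard := card_dual_pi F n
  rw [hF] at hcard
  let e := (Finite.equivFinOfCardEq hcard).symm
  let f i : Module.Dual F (Fin n → F) := (e i).rep
  choose β hβ using fun i ↦ LinearMap.surjective_of_ne_zero (e i).rep_nonzero (1 : F)
  refine ⟨fun i ↦ f i ⁻¹' {0}, fun i ↦ f i ⁻¹' {1}, fun i ↦ ?_, fun i ↦ ?_,
    fun i ↦ Set.eq_empty_of_forall_notMem fun x ⟨h0, h1⟩ ↦ zero_ne_one (h0.symm.trans h1),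
    fun i j hij ↦ nonempty_rep_preimage_zero_inter_rep_preimage_one (e.injective.ne hij.ne)⟩
  · simpa using isAffineSubspace_preimage_singleton (f i) 0
  · exact hβ i ▸ isAffineSubspace_preimage_singleton (f i) (β i)

theorem stmt4 (q n : ℕ) (hq : IsPrimePow q) (hn : 1 ≤ n)
    (F : Type) [Field F] [Fintype F] (hF : Fintype.card F = q) :
    ∃ (A B : Fin ((q ^ n - 1) / (q - 1)) → Set (Fin n → F)),
      (∀ i, IsAffineSubspace (A i)) ∧ (∀ i, IsAffineSubspace (B i)) ∧
      (∀ i, A i ∩ B i = ∅) ∧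
      (∀ i j, i < j → (A i ∩ B j).Nonempty) :=
  stmt4_general q n F hF
end

section
/- Let q ≠ 2 be a prime power and n ≥ 1. If A_1,...,A_m and B_1,...,B_m are affine hyperplanes of F_q^n (affine subspaces of dimension n-1) with A_i ∩ B_i = ∅ for all i and A_i ∩ B_j ≠ ∅ for i < j, then m ≤ q^n + 1. -/
/-! Disjoint hyperplanes are parallel, and parallel hyperplanes that meet coincide. So if
`A i`, `A j`, `A k` with `i < j < k` were parallel, then `A i = B j`, `A i = B k` and `A j = B k`,
whence `A j = B j`, contradicting `A j ∩ B j = ∅`. Each of the `(q^n - 1)/(q - 1)` hyperplane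
directions therefore occurs at most twice, and `m ≤ 2 (q^n - 1)/(q - 1) ≤ q^n - 1` as
`q ≥ 3`. -/

def IsAffineHyperplane {F : Type*} [Field F] {n : ℕ} (S : Set (Fin n → F)) : Prop :=
  ∃ (a : Fin n → F) (U : Submodule F (Fin n → F)),
    Module.finrank F U = n - 1 ∧ S = (fun u => a + u) '' (U : Set (Fin n → F))

open Module Finset

theorem Finset.card_le_two_of_forall_not_lt_lt {α : Type*} [LinearOrder α] {s : Finset α}
    (h : ∀ i ∈ s, ∀ j ∈ s, ∀ k ∈ s, i < j → j < k → False) : #s ≤ 2 := by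
  by_contra! hs
  have hne : s.Nonempty := card_pos.mp (by omega)
  obtain ⟨j, hj⟩ : ((s.erase (s.min' hne)).erase (s.max' hne)).Nonempty := by
    rw [← card_pos]
    have h₁ := pred_card_le_card_erase (s := s) (a := s.min' hne)
    have h₂ := pred_card_le_card_erase (s := s.erase (s.min' hne)) (a := s.max' hne)
    omega
  simp only [mem_erase] at hj
  obtain ⟨hj_max, hj_min, hjs⟩ := hj
  exact h _ (min'_mem s hne) j hjs _ (max'_mem s hne)
    ((min'_le s j hjs).lt_of_ne' hj_min) ((le_max' s j hjs).lt_of_ne hj_max)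

section LinearHyperplanes

variable {K V : Type*} [Field K] [AddCommGroup V] [Module K V]

theorem Submodule.isCoatom_of_ne_top_of_finrank_eq [FiniteDimensional K V] {U : Submodule K V}
    (hU : U ≠ ⊤) (h : finrank K U = finrank K V - 1) : IsCoatom U :=
  ⟨hU, fun W hW => Submodule.eq_top_of_finrank_eq <| by
    have := Submodule.finrank_lt_finrank_of_lt hW
    have := Submodule.finrank_le W
    omega⟩

theorem Submodule.exists_dual_ne_zero_ker_eq_of_isCoatom {U : Submodule K V} (hU : IsCoatom U) :
    ∃ f : Dual K V, f ≠ 0 ∧ LinearMap.ker f = U := by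
  obtain ⟨f, hf, hUf⟩ := U.exists_dual_map_eq_bot_of_lt_top hU.lt_top inferInstance
  refine ⟨f, hf, (hU.le_iff_eq fun h => hf (LinearMap.ker_eq_top.mp h)).mp ?_⟩
  exact LinearMap.le_ker_iff_map.mpr hUf

theorem Nat.card_dual [Finite V] : Nat.card (Dual K V) = Nat.card V := by
  classical
  exact Nat.card_congr (Module.finBasis K V).toDualEquiv.toEquiv.symm

/-- `(U, c) ↦ c • f_U` is injective into the nonzero functionals, for any choice of a functional
`f_U` with kernel `U`. -/
theorem card_mul_le_of_forall_isCoatom [Finite V] (S : Finset (Submodule K V))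
    (hS : ∀ U ∈ S, IsCoatom U) : #S * (Nat.card K - 1) ≤ Nat.card V - 1 := by
  choose f hf0 hker using fun U (hU : U ∈ S) => U.exists_dual_ne_zero_ker_eq_of_isCoatom (hS U hU)
  have : Finite (Dual K V) :=
    Nat.finite_of_card_ne_zero (by rw [Nat.card_dual]; exact Nat.card_pos.ne')
  let Φ : S × Kˣ → ({0}ᶜ : Set (Dual K V)) := fun p =>
    ⟨(p.2 : K) • f p.1 p.1.2, smul_ne_zero p.2.ne_zero (hf0 _ _)⟩
  have hΦ : Function.Injective Φ := by
    rintro ⟨⟨U, hU⟩, c⟩ ⟨⟨W, hW⟩, d⟩ h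
    replace h : (c : K) • f U hU = (d : K) • f W hW := congrArg Subtype.val h
    obtain rfl : U = W := by
      rw [← hker U hU, ← hker W hW, ← LinearMap.ker_smul _ _ c.ne_zero, h,
        LinearMap.ker_smul _ _ d.ne_zero]
    obtain rfl : c = d := Units.ext (smul_left_injective K (hf0 U hU) h)
    rfl
  have := Nat.card_le_card_of_injective Φ hΦ
  rwa [Nat.card_prod, Nat.card_eq_finsetCard, Nat.card_units, Nat.card_coe_set_eq,
    Set.ncard_compl, Set.ncard_singleton, Nat.card_dual] at this

end LinearHyperplanes

namespace AffineSubspace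

variable {K V P : Type*} [Field K] [AddCommGroup V] [Module K V] [AddTorsor V P]

theorem coe_mk'_eq_image_add (a : V) (U : Submodule K V) :
    (mk' a U : Set V) = (fun u => a + u) '' (U : Set V) := by
  ext x
  simp [mem_mk', neg_add_eq_sub]

def IsHyperplane (s : AffineSubspace K P) : Prop :=
  (s : Set P).Nonempty ∧ IsCoatom s.direction

theorem IsHyperplane.direction_eq_of_disjoint {s t : AffineSubspace K P} (hs : s.IsHyperplane)
    (ht : t.IsHyperplane) (h : Disjoint (s : Set P) t) : s.direction = t.direction := by
  by_contra hne
  obtain ⟨p, hp⟩ := inter_nonempty_of_nonempty_of_sup_direction_eq_top hs.1 ht.1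
    (hs.2.sup_eq_top_of_ne ht.2 hne)
  exact h.ne_of_mem hp.1 hp.2 rfl

theorem card_le_two_mul_card_image_direction {ι : Type*} [Fintype ι] [LinearOrder ι]
    (A B : ι → AffineSubspace K P)
    (hA : ∀ i, (A i).IsHyperplane) (hB : ∀ i, (B i).IsHyperplane)
    (hdisj : ∀ i, Disjoint (A i : Set P) (B i))
    (hcross : ∀ i j, i < j → ((A i : Set P) ∩ B j).Nonempty) :
    Fintype.card ι ≤ 2 * #(univ.image fun i => (A i).direction) := by
  classical
  have hdir i : (A i).direction = (B i).direction :=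
    (hA i).direction_eq_of_disjoint (hB i) (hdisj i)
  have heq {i j} (hij : i < j) (h : (A i).direction = (A j).direction) : A i = B j :=
    ext_of_direction_eq (h.trans (hdir j)) (hcross i j hij)
  refine card_le_mul_card_image univ 2 fun D _ => card_le_two_of_forall_not_lt_lt ?_
  simp only [mem_filter, mem_univ, true_and]
  rintro i rfl j hj k hk hij hjk
  have hAj : A j = B j := by
    rw [← heq hij hj.symm, heq (hij.trans hjk) hk.symm, ← heq hjk (hj.trans hk.symm)]
  obtain ⟨p, hp⟩ := (hA j).1
  exact (hdisj j).ne_of_mem hp (hAj ▸ hp) rfl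

end AffineSubspace

section CoordinateSpace

variable {F : Type*} [Field F] {n : ℕ}

theorem IsAffineHyperplane.exists_isHyperplane_of_inter_eq_empty {S T : Set (Fin n → F)}
    (hS : IsAffineHyperplane S) (hT : IsAffineHyperplane T) (h : S ∩ T = ∅) :
    ∃ s : AffineSubspace F (Fin n → F), s.IsHyperplane ∧ (s : Set (Fin n → F)) = S := by
  obtain ⟨a, U, hU, rfl⟩ := hS
  obtain ⟨b, W, -, rfl⟩ := hT
  have hU_ne_top : U ≠ ⊤ := by
    rintro rfl
    exact Set.eq_empty_iff_forall_notMem.mp h b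
      ⟨⟨b - a, trivial, by simp⟩, 0, W.zero_mem, add_zero b⟩
  refine ⟨AffineSubspace.mk' a U, ⟨AffineSubspace.mk'_nonempty a U, ?_⟩,
    AffineSubspace.coe_mk'_eq_image_add a U⟩
  rw [AffineSubspace.direction_mk']
  exact Submodule.isCoatom_of_ne_top_of_finrank_eq hU_ne_top (by rwa [finrank_fin_fun])

end CoordinateSpace

theorem stmt11_general (q n : ℕ) (hq2 : q ≠ 2)
    (F : Type) [Field F] [Fintype F] (hF : Fintype.card F = q)
    (m : ℕ) (A B : Fin m → Set (Fin n → F))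
    (hA : ∀ i, IsAffineHyperplane (A i)) (hB : ∀ i, IsAffineHyperplane (B i))
    (hdisj : ∀ i, A i ∩ B i = ∅)
    (hcross : ∀ i j, i < j → (A i ∩ B j).Nonempty) :
    m ≤ q ^ n + 1 := by
  classical
  choose A' hA' hAA' using fun i =>
    (hA i).exists_isHyperplane_of_inter_eq_empty (hB i) (hdisj i)
  choose B' hB' hBB' using fun i =>
    (hB i).exists_isHyperplane_of_inter_eq_empty (hA i) (Set.inter_comm (A i) (B i) ▸ hdisj i)
  have hm := AffineSubspace.card_le_two_mul_card_image_direction A' B' hA' hB'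
    (fun i => Set.disjoint_iff_inter_eq_empty.mpr (by rw [hAA', hBB']; exact hdisj i))
    (fun i j hij => by rw [hAA', hBB']; exact hcross i j hij)
  have hD := card_mul_le_of_forall_isCoatom (univ.image fun i => (A' i).direction)
    (by simpa using fun i => (hA' i).2)
  set D := #(univ.image fun i => (A' i).direction)
  have hq : 3 ≤ q := by
    have := Fintype.one_lt_card (α := F)
    omega
  rw [Fintype.card_fin] at hm
  simp only [Nat.card_eq_fintype_card, Fintype.card_fun, Fintype.card_fin, hF] at hD
  have := Nat.mul_le_mul_left D (show 2 ≤ q - 1 by omega)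
  omega

theorem stmt11 (q n : ℕ) (hq : IsPrimePow q) (hq2 : q ≠ 2) (hn : 1 ≤ n)
    (F : Type) [Field F] [Fintype F] (hF : Fintype.card F = q)
    (m : ℕ) (A B : Fin m → Set (Fin n → F))
    (hA : ∀ i, IsAffineHyperplane (A i)) (hB : ∀ i, IsAffineHyperplane (B i))
    (hdisj : ∀ i, A i ∩ B i = ∅)
    (hcross : ∀ i j, i < j → (A i ∩ B j).Nonempty) :
    m ≤ q ^ n + 1 :=
  stmt11_general q n hq2 F hF m A B hA hB hdisj hcross
end

section
/- Let A_1,...,A_m be r-element sets and B_1,...,B_m be s-element sets such that A_i ∩ B_i = ∅ for all i and A_i ∩ B_j ≠ ∅ whenever i < j. Then m ≤ C(r+s, r). -/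
/-!
Lovász's exterior-algebra argument. Send each point `x` of the ground set to the point
`(X_x ^ j)_{j < r + s}` of the moment curve over `ℤ[X_x | x]`; any `r + s` distinct such points are
linearly independent (Vandermonde). Let `w_j ∈ ⋀^s` be the wedge of the points of `B_j`, and let
`F_i` be the functional `w ↦ det [points of A_i; w]` on `⋀^s`. Then `F_i w_i ≠ 0`, while for
`i < j` a common point of `A_i` and `B_j` gives a repeated row, so `F_i w_j = 0`. This triangular
pattern makes the `w_j` linearly independent in a space of dimension `C(r + s, s)`.
-/

open Matrix

-- The instance is arbitrary, as in the fields of `MultilinearMap`.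
theorem Fin.append_update_right {α : Type*} {r s : ℕ} [DecidableEq (Fin s)] (u : Fin r → α)
    (w : Fin s → α) (l : Fin s) (y : α) :
    Fin.append u (Function.update w l y) = Function.update (Fin.append u w) (Fin.natAdd r l) y := by
  ext p
  refine Fin.addCases (fun k => ?_) (fun k => ?_) p
  · simp only [Fin.append_left, Function.update_apply, Fin.ext_iff, Fin.val_castAdd, Fin.val_natAdd,
      right_eq_ite_iff]
    omega
  · simp [Function.update_apply]

theorem Finset.exists_injective_fin_range_eq {α : Type*} {n : ℕ} (S : Finset α) (h : S.card = n) :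
    ∃ e : Fin n → α, Function.Injective e ∧ Set.range e = S := by
  let e := Fintype.equivFinOfCardEq (by rw [Fintype.card_coe, h] : Fintype.card S = n)
  refine ⟨(↑) ∘ e.symm, Subtype.val_injective.comp e.symm.injective, ?_⟩
  rw [Set.range_comp, e.symm.range_eq_univ, Set.image_univ, Subtype.range_coe]

namespace SkewBollobas

variable {R : Type*} [CommRing R]

theorem linearIndependent_of_triangular [IsDomain R] {M ι : Type*} [AddCommGroup M] [Module R M]
    [Fintype ι] [LinearOrder ι] {v : ι → M} {φ : ι → Module.Dual R M}
    (hdiag : ∀ i, φ i (v i) ≠ 0) (htri : ∀ i j, i < j → φ i (v j) = 0) :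
    LinearIndependent R v := by
  set P : Matrix ι ι R := of fun i j => φ i (v j)
  have hP : P.det ≠ 0 := by
    rw [det_of_isLowerTriangular P fun i j hij => htri i j hij]
    exact Finset.prod_ne_zero_iff.mpr fun i _ => hdiag i
  refine Fintype.linearIndependent_iff.mpr fun g hg => congr_fun (eq_zero_of_mulVec_eq_zero hP ?_)
  ext i
  simpa [P, mulVec, dotProduct, mul_comm] using congr_arg (φ i) hg

variable {r s : ℕ}

def detAppend (u : Fin r → Fin (r + s) → R) : (Fin (r + s) → R) [⋀^Fin s]→ₗ[R] R where
  toFun w := det (of (Fin.append u w))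
  map_update_add' w l x y := by
    simp only [Fin.append_update_right]
    exact det_updateRow_add (of (Fin.append u w)) (Fin.natAdd r l) x y
  map_update_smul' w l c x := by
    simp only [Fin.append_update_right]
    exact det_updateRow_smul (of (Fin.append u w)) (Fin.natAdd r l) c x
  map_eq_zero_of_eq' w k l hkl hne :=
    det_zero_of_row_eq (i := Fin.natAdd r k) (j := Fin.natAdd r l) (by simpa using hne)
      (show Fin.append u w _ = Fin.append u w _ by rw [Fin.append_right, Fin.append_right, hkl])

theorem card_le_choose_of_det_append [IsDomain R] {ι : Type*} [Fintype ι] [LinearOrder ι]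
    (u : ι → Fin r → Fin (r + s) → R) (w : ι → Fin s → Fin (r + s) → R)
    (hdiag : ∀ i, det (of (Fin.append (u i) (w i))) ≠ 0)
    (htri : ∀ i j, i < j → det (of (Fin.append (u i) (w j))) = 0) :
    Fintype.card ι ≤ (r + s).choose r := by
  let F : ι → Module.Dual R (⋀[R]^s (Fin (r + s) → R)) := fun i =>
    exteriorPower.alternatingMapLinearEquiv (detAppend (u i))
  have hF : ∀ i j, F i (exteriorPower.ιMulti R s (w j)) = det (of (Fin.append (u i) (w j))) :=
    fun i j => exteriorPower.alternatingMapLinearEquiv_apply_ιMulti _ _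
  have hli : LinearIndependent R fun j => exteriorPower.ιMulti R s (w j) :=
    linearIndependent_of_triangular (φ := F) (by simpa only [hF] using hdiag)
      (by simpa only [hF] using htri)
  calc Fintype.card ι ≤ Module.finrank R (⋀[R]^s (Fin (r + s) → R)) := hli.fintype_card_le_finrank
    _ = (r + s).choose r := by
      rw [exteriorPower.finrank_eq, Module.finrank_fin_fun, Nat.choose_symm_add]

theorem of_append_pow_eq_vandermonde {α : Type*} (t : α → R) (a : Fin r → α) (b : Fin s → α) :
    of (Fin.append (fun k (j : Fin (r + s)) => t (a k) ^ (j : ℕ)) fun l j => t (b l) ^ (j : ℕ)) =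
      vandermonde (t ∘ Fin.append a b) := by
  ext p j
  refine Fin.addCases (fun k => ?_) (fun l => ?_) p <;> simp [vandermonde]

-- Independent variables serve as points in general position, whatever the size of `α`.
theorem card_le_choose_of_append_injective {α ι : Type*} [Fintype ι] [LinearOrder ι]
    (a : ι → Fin r → α) (b : ι → Fin s → α)
    (hdiag : ∀ i, Function.Injective (Fin.append (a i) (b i)))
    (hcross : ∀ i j, i < j → ∃ k l, a i k = b j l) :
    Fintype.card ι ≤ (r + s).choose r := by
  let t : α → MvPolynomial α ℤ := MvPolynomial.X
  refine card_le_choose_of_det_append (fun i k j => t (a i k) ^ (j : ℕ))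
    (fun i l j => t (b i l) ^ (j : ℕ)) (fun i => ?_) (fun i j hij => ?_) <;>
    rw [of_append_pow_eq_vandermonde]
  · exact det_vandermonde_ne_zero_iff.mpr (MvPolynomial.X_injective.comp (hdiag i))
  · obtain ⟨k, l, hkl⟩ := hcross i j hij
    refine det_vandermonde_eq_zero_iff.mpr ⟨Fin.castAdd s k, Fin.natAdd r l, by simp [hkl], ?_⟩
    simp only [ne_eq, Fin.ext_iff, Fin.val_castAdd, Fin.val_natAdd]
    omega

end SkewBollobas

open SkewBollobas in
theorem stmt14 (α : Type) [DecidableEq α] (m r s : ℕ)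
    (A B : Fin m → Finset α)
    (hA : ∀ i, (A i).card = r) (hB : ∀ i, (B i).card = s)
    (hdisj : ∀ i, A i ∩ B i = ∅)
    (hcross : ∀ i j, i < j → (A i ∩ B j).Nonempty) :
    m ≤ (r + s).choose r := by
  choose a ha_inj ha_range using fun i => (A i).exists_injective_fin_range_eq (hA i)
  choose b hb_inj hb_range using fun i => (B i).exists_injective_fin_range_eq (hB i)
  have ha_mem : ∀ i k, a i k ∈ A i := fun i k => Finset.mem_coe.mp (ha_range i ▸ ⟨k, rfl⟩)
  have hb_mem : ∀ i l, b i l ∈ B i := fun i l => Finset.mem_coe.mp (hb_range i ▸ ⟨l, rfl⟩)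
  have hdiag : ∀ i, Function.Injective (Fin.append (a i) (b i)) := fun i =>
    Fin.append_injective_iff.mpr ⟨ha_inj i, hb_inj i, fun k l hkl =>
      Finset.notMem_empty _ (hdisj i ▸ Finset.mem_inter.mpr ⟨ha_mem i k, hkl ▸ hb_mem i l⟩)⟩
  have hcross' : ∀ i j, i < j → ∃ k l, a i k = b j l := by
    intro i j hij
    obtain ⟨x, hx⟩ := hcross i j hij
    rw [Finset.mem_inter, ← Finset.mem_coe, ← ha_range i, ← Finset.mem_coe, ← hb_range j] at hx
    obtain ⟨⟨k, rfl⟩, l, hl⟩ := hx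
    exact ⟨k, l, hl.symm⟩
  simpa using card_le_choose_of_append_injective a b hdiag hcross'
end

section
/- Let A_1,...,A_m and B_1,...,B_m be finite sets such that A_i ∩ B_j = ∅ if and only if i = j. Then the sum over i of 1/C(|A_i| + |B_i|, |A_i|) is at most 1. -/
/-!
Induction on a ground set `X` containing all the sets. For `x ∈ X`, the pairs
`(A i \ {x}, B i)` with `x ∉ B i` again satisfy the hypotheses on `X \ {x}`, so their weights
sum to at most `1`. Summing over `x ∈ X`, the pair `i` contributes exactly `|X|` times its weight
`1 / C(a + b, a)`, by the identity `a / C(a - 1 + b, a - 1) = (a + b) / C(a + b, a)` (this needs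
`A i ≠ ∅`, which the cross-intersection condition forces once there are two pairs). Hence
`|X| · ∑ᵢ 1 / C(aᵢ + bᵢ, aᵢ) ≤ |X|`.
-/

open Finset

def setPairWeight (a b : ℕ) : ℚ := 1 / ((a + b).choose a)

lemma setPairWeight_le_one (a b : ℕ) : setPairWeight a b ≤ 1 := by
  unfold setPairWeight
  rw [div_le_one (by exact_mod_cast Nat.choose_pos (Nat.le_add_right a b))]
  exact_mod_cast Nat.choose_pos (Nat.le_add_right a b)

lemma add_one_mul_setPairWeight (a b : ℕ) :
    (a + 1) * setPairWeight a b = (a + 1 + b) * setPairWeight (a + 1) b := by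
  have hpos : ∀ n k : ℕ, k ≤ n → ((n.choose k : ℕ) : ℚ) ≠ 0 := fun n k hk =>
    Nat.cast_ne_zero.mpr (Nat.choose_pos hk).ne'
  have key : ((a + b + 1 : ℕ) : ℚ) * (a + b).choose a =
      (a + b + 1).choose (a + 1) * (a + 1 : ℕ) := by
    exact_mod_cast Nat.add_one_mul_choose_eq (a + b) a
  unfold setPairWeight
  rw [show a + 1 + b = a + b + 1 by ring]
  field_simp [hpos (a + b) a (by omega), hpos (a + b + 1) (a + 1) (by omega)]
  push_cast at key
  linarith

lemma sum_setPairWeight_le_one_of_card_le_one {ι : Type*} {s : Finset ι} (a b : ι → ℕ)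
    (hs : #s ≤ 1) : ∑ i ∈ s, setPairWeight (a i) (b i) ≤ 1 :=
  calc ∑ i ∈ s, setPairWeight (a i) (b i) ≤ #s • (1 : ℚ) :=
        sum_le_card_nsmul _ _ _ fun i _ => setPairWeight_le_one _ _
    _ ≤ 1 := by simpa using hs

variable {α : Type*} [DecidableEq α]

lemma sum_sdiff_setPairWeight_erase {X A B : Finset α} (hA : A ⊆ X) (hB : B ⊆ X)
    (hAB : Disjoint A B) (hA₀ : A.Nonempty) :
    ∑ x ∈ X \ B, setPairWeight #(A.erase x) #B = #X * setPairWeight #A #B := by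
  obtain ⟨a, ha⟩ : ∃ a, #A = a + 1 := Nat.exists_eq_add_one.mpr hA₀.card_pos
  have hAXB : A ⊆ X \ B := subset_sdiff.mpr ⟨hA, hAB⟩
  have hcard : #((X \ B) \ A) + #A + #B = #X := by
    rw [card_sdiff_add_card_eq_card hAXB, card_sdiff_add_card_eq_card hB]
  have h_out : ∀ x ∈ (X \ B) \ A, setPairWeight #(A.erase x) #B = setPairWeight #A #B :=
    fun x hx => by rw [erase_eq_of_notMem (mem_sdiff.mp hx).2]
  have h_in : ∀ x ∈ A, setPairWeight #(A.erase x) #B = setPairWeight a #B :=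
    fun x hx => by rw [card_erase_of_mem hx, ha, Nat.add_sub_cancel]
  rw [← sum_sdiff hAXB, sum_congr rfl h_out, sum_congr rfl h_in, sum_const, sum_const,
    nsmul_eq_mul, nsmul_eq_mul, ← hcard, ha]
  push_cast
  rw [add_one_mul_setPairWeight]
  ring

theorem sum_setPairWeight_le_one {ι : Type*} (X : Finset α) (s : Finset ι) (A B : ι → Finset α)
    (hA : ∀ i ∈ s, A i ⊆ X) (hB : ∀ i ∈ s, B i ⊆ X) (hAB : ∀ i ∈ s, Disjoint (A i) (B i))
    (hcross : ∀ i ∈ s, ∀ j ∈ s, i ≠ j → ¬Disjoint (A i) (B j)) :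
    ∑ i ∈ s, setPairWeight #(A i) #(B i) ≤ 1 := by
  induction X using Finset.strongInduction generalizing s A with
  | H X ih =>
  rcases le_or_gt #s 1 with hs | hs
  · exact sum_setPairWeight_le_one_of_card_le_one _ _ hs
  have hA₀ : ∀ i ∈ s, (A i).Nonempty := fun i hi => by
    obtain ⟨j, hj, hji⟩ := exists_mem_ne hs i
    exact nonempty_of_ne_empty fun h => hcross i hi j hj hji.symm (h ▸ disjoint_empty_left _)
  obtain ⟨i₀, hi₀⟩ := card_pos.mp (zero_lt_one.trans hs)
  have hX : (0 : ℚ) < #X := by exact_mod_cast ((hA₀ i₀ hi₀).mono (hA i₀ hi₀)).card_pos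
  have h_erase : ∀ x ∈ X,
      ∑ i ∈ s with x ∉ B i, setPairWeight #((A i).erase x) #(B i) ≤ 1 := fun x hx => by
    refine ih _ (erase_ssubset hx) _ _
      (fun i hi => erase_subset_erase x (hA i (mem_filter.mp hi).1))
      (fun i hi => subset_erase.mpr ⟨hB i (mem_filter.mp hi).1, (mem_filter.mp hi).2⟩)
      (fun i hi => (hAB i (mem_filter.mp hi).1).mono_left (erase_subset x _)) ?_
    intro i hi j hj hij hdisj
    rw [mem_filter] at hi hj
    exact hcross i hi.1 j hj.1 hij
      ((disjoint_insert_left.mpr ⟨hj.2, hdisj⟩).mono_left (insert_erase_subset x _))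
  refine le_of_mul_le_mul_left ?_ hX
  calc (#X : ℚ) * ∑ i ∈ s, setPairWeight #(A i) #(B i)
      = ∑ i ∈ s, ∑ x ∈ X \ B i, setPairWeight #((A i).erase x) #(B i) := by
        rw [mul_sum]
        exact sum_congr rfl fun i hi =>
          (sum_sdiff_setPairWeight_erase (hA i hi) (hB i hi) (hAB i hi) (hA₀ i hi)).symm
    _ = ∑ x ∈ X, ∑ i ∈ s with x ∉ B i, setPairWeight #((A i).erase x) #(B i) :=
        sum_comm' fun i x => by simp only [mem_sdiff, mem_filter]; tauto
    _ ≤ ∑ x ∈ X, 1 := sum_le_sum h_erase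
    _ = #X * 1 := by simp

theorem stmt15 (α : Type) [DecidableEq α] (m : ℕ)
    (A B : Fin m → Finset α)
    (h : ∀ i j, A i ∩ B j = ∅ ↔ i = j) :
    ∑ i : Fin m, (1 : ℚ) / (((A i).card + (B i).card).choose (A i).card) ≤ 1 := by
  have hsub : ∀ i, A i ∪ B i ⊆ univ.biUnion fun j => A j ∪ B j :=
    fun i => subset_biUnion_of_mem (fun j => A j ∪ B j) (mem_univ i)
  refine sum_setPairWeight_le_one _ univ A B (fun i _ => subset_union_left.trans (hsub i))
    (fun i _ => subset_union_right.trans (hsub i))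
    (fun i _ => disjoint_iff_inter_eq_empty.mpr ((h i i).mpr rfl)) ?_
  intro i _ j _ hij
  rw [disjoint_iff_inter_eq_empty, h]
  exact hij
end

section
/- For q ≥ 3 a prime power and n ≥ 1, the maximal size m(n,q) of a cross-intersecting pair of families of affine subspaces of F_q^n satisfies (q^n - 1)/(q - 1) ≤ m(n,q) ≤ q^n + 1. -/
def CrossIntersecting {F : Type*} [Field F] {n m : ℕ}
    (A B : Fin m → Set (Fin n → F)) : Prop :=
  (∀ i, IsAffineSubspace (A i)) ∧ (∀ i, IsAffineSubspace (B i)) ∧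
  (∀ i, A i ∩ B i = ∅) ∧ (∀ i j, i < j → (A i ∩ B j).Nonempty)

/-!
Lower bound: pair each of the `(q ^ n - 1) / (q - 1)` hyperplanes `H` through the origin with a
parallel translate of itself, `(x + H, H)`. Two distinct hyperplanes through the origin are not
parallel, so every translate of one meets the other.

Upper bound: disjoint affine subspaces `A i`, `B i` are separated by a nonzero functional `φ i`
taking the value `c i` on `A i` and `c i - 1` on `B i`. If `φ i`, `φ j`, `φ k` with `i < j < k`
were proportional, evaluating them at points of `A i ∩ B j`, `A i ∩ B k` and `A j ∩ B k` would
give `c j = c j - 1`. Hence `i ↦ [φ i]` is at most two-to-one into the dual projective space, and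
`m ≤ 2 (q ^ n - 1) / (q - 1) ≤ q ^ n - 1` as `q ≥ 3`.
-/

open Module Submodule
open scoped LinearAlgebra.Projectivization

theorem Fintype.card_le_two_mul_natCard_of_lt_of_lt {ι β : Type*} [Fintype ι] [LinearOrder ι]
    [Finite β] (f : ι → β) (h : ∀ i j k, i < j → j < k → f i = f j → f j ≠ f k) :
    Fintype.card ι ≤ 2 * Nat.card β := by
  classical
  have := Fintype.ofFinite β
  rw [Nat.card_eq_fintype_card, ← Finset.card_univ, ← Finset.card_univ]
  refine Finset.card_le_mul_card_image_of_maps_to (f := f) (fun _ _ => Finset.mem_univ _) 2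
    fun b _ => ?_
  by_contra! hlt
  set s := ({a | f a = b} : Finset ι)
  let e := s.orderEmbOfFin rfl
  have hs : ∀ r, f (e r) = b := fun r => (Finset.mem_filter.1 (s.orderEmbOfFin_mem rfl r)).2
  exact h (e ⟨0, by omega⟩) (e ⟨1, by omega⟩) (e ⟨2, hlt⟩) (by simp) (by simp)
    ((hs _).trans (hs _).symm) ((hs _).trans (hs _).symm)

section Dual

variable {F V : Type*} [Field F] [AddCommGroup V] [Module F V]

theorem Projectivization.exists_apply_eq_one_apply_eq_zero_of_mk_ne {φ ψ : Dual F V}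
    (hφ : φ ≠ 0) (hψ : ψ ≠ 0) (h : mk F φ hφ ≠ mk F ψ hψ) : ∃ x, φ x = 1 ∧ ψ x = 0 := by
  by_contra! hno
  have hker : ⨅ _ : Unit, LinearMap.ker ψ ≤ LinearMap.ker φ := by
    intro x hx
    simp only [iInf_const, LinearMap.mem_ker] at hx ⊢
    by_contra hφx
    exact hno ((φ x)⁻¹ • x) (by simp [hφx]) (by simp [hx])
  obtain ⟨a, rfl⟩ := mem_span_singleton.1 (by simpa using mem_span_of_iInf_ker_le_ker hker)
  exact h ((mk_eq_mk_iff' F _ _ hφ hψ).2 ⟨a, rfl⟩)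

variable {ι : Type*} [LinearOrder ι] {A B : ι → Set V} {φ : ι → Dual F V} {c : ι → F}

theorem Projectivization.mk_ne_mk_of_separating (hφ : ∀ i, φ i ≠ 0)
    (hA : ∀ i, ∀ x ∈ A i, φ i x = c i) (hB : ∀ i, ∀ y ∈ B i, φ i y = c i - 1)
    (hAB : ∀ i j, i < j → (A i ∩ B j).Nonempty) {i j k : ι} (hij : i < j) (hjk : j < k)
    (h : mk F (φ i) (hφ i) = mk F (φ j) (hφ j)) :
    mk F (φ j) (hφ j) ≠ mk F (φ k) (hφ k) := by
  intro h'
  obtain ⟨s, hs⟩ := (mk_eq_mk_iff' F _ _ (hφ j) (hφ i)).1 h.symm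
  obtain ⟨t, ht⟩ := (mk_eq_mk_iff' F _ _ (hφ k) (hφ i)).1 (h.trans h').symm
  obtain ⟨x, hxA, hxB⟩ := hAB i j hij
  obtain ⟨y, hyA, hyB⟩ := hAB i k (hij.trans hjk)
  obtain ⟨z, hzA, hzB⟩ := hAB j k hjk
  have hx := hB j x hxB
  have hy := hB k y hyB
  have hz := hA j z hzA
  have hz' := hB k z hzB
  simp only [← hs, ← ht, LinearMap.smul_apply, smul_eq_mul, hA i x hxA, hA i y hyA]
    at hx hy hz hz'
  have ht0 : t ≠ 0 := by rintro rfl; exact hφ k (by simp [← ht])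
  have hzi : φ i z = c i := mul_left_cancel₀ ht0 (hz'.trans hy.symm)
  have : (1 : F) = 0 := by linear_combination hx - hz + s * hzi
  exact one_ne_zero this

end Dual

section AffineSubspaces

variable {F : Type*} [Field F] {n : ℕ}

theorem IsAffineSubspace.nonempty {S : Set (Fin n → F)} (hS : IsAffineSubspace S) :
    S.Nonempty := by
  obtain ⟨a, U, rfl⟩ := hS
  exact ⟨a + 0, 0, U.zero_mem, rfl⟩

theorem isAffineSubspace_setOf_apply_eq {φ : Dual F (Fin n → F)} (hφ : φ ≠ 0) (c : F) :
    IsAffineSubspace {x | φ x = c} := by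
  obtain ⟨a, ha⟩ := LinearMap.surjective_of_ne_zero hφ c
  refine ⟨a, LinearMap.ker φ, Set.ext fun x => ⟨fun hx => ⟨x - a, ?_, by simp⟩, ?_⟩⟩
  · simp_all [LinearMap.mem_ker]
  · rintro ⟨u, hu, rfl⟩
    simp_all [LinearMap.mem_ker]

theorem IsAffineSubspace.exists_dual_of_inter_eq_empty {A B : Set (Fin n → F)}
    (hA : IsAffineSubspace A) (hB : IsAffineSubspace B) (hAB : A ∩ B = ∅) :
    ∃ (φ : Dual F (Fin n → F)) (c : F), (∀ x ∈ A, φ x = c) ∧ ∀ y ∈ B, φ y = c - 1 := by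
  obtain ⟨a, U, rfl⟩ := hA
  obtain ⟨b, W, rfl⟩ := hB
  have hab : a - b ∉ U ⊔ W := by
    rintro hab
    obtain ⟨u, hu, w, hw, huw⟩ := mem_sup.1 hab
    have : a + -u ∈ ((a + ·) '' U) ∩ ((b + ·) '' W) :=
      ⟨⟨-u, neg_mem hu, rfl⟩, ⟨w, hw, show b + w = a + -u by linear_combination huw⟩⟩
    rwa [hAB] at this
  obtain ⟨f, hfab, hf⟩ := exists_dual_map_eq_bot_of_notMem hab inferInstance
  have hf0 : ∀ x ∈ U ⊔ W, f x = 0 := fun x hx =>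
    (mem_bot F).1 (hf ▸ mem_map_of_mem hx)
  refine ⟨(f (a - b))⁻¹ • f, (f (a - b))⁻¹ * f a, ?_, ?_⟩
  · rintro x ⟨u, hu, rfl⟩
    simp [hf0 u (mem_sup_left hu)]
  · rintro y ⟨w, hw, rfl⟩
    rw [map_sub] at hfab
    simp only [LinearMap.smul_apply, map_add, hf0 w (mem_sup_right hw), map_sub, smul_eq_mul]
    field_simp
    ring

end AffineSubspaces

section FiniteField

open Projectivization

variable {F : Type*} [Field F] {n : ℕ}

theorem natCard_projectivization_dual_mul :
    Nat.card (ℙ F (Dual F (Fin n → F))) * (Nat.card F - 1) = Nat.card F ^ n - 1 := by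
  rw [← Projectivization.card, ← Nat.card_congr (Pi.basisFun F (Fin n)).toDualEquiv.toEquiv,
    Nat.card_fun, Nat.card_fin]

variable [Finite F]

instance : Finite (Dual F (Fin n → F)) := Module.finite_of_finite F

theorem exists_crossIntersecting_natCard_projectivization_dual :
    ∃ A B : Fin (Nat.card (ℙ F (Dual F (Fin n → F)))) → Set (Fin n → F),
      CrossIntersecting A B := by
  let e := (Finite.equivFin (ℙ F (Dual F (Fin n → F)))).symm
  refine ⟨fun i => {x | (e i).rep x = 1}, fun i => {x | (e i).rep x = 0},
    fun i => isAffineSubspace_setOf_apply_eq (e i).rep_nonzero 1,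
    fun i => isAffineSubspace_setOf_apply_eq (e i).rep_nonzero 0,
    fun i => Set.eq_empty_of_forall_notMem fun x ⟨h1, h0⟩ => one_ne_zero (h1.symm.trans h0),
    fun i j hij => ?_⟩
  have hne : mk F _ (e i).rep_nonzero ≠ mk F _ (e j).rep_nonzero := by
    simpa only [mk_rep] using e.injective.ne hij.ne
  exact exists_apply_eq_one_apply_eq_zero_of_mk_ne _ _ hne

theorem CrossIntersecting.card_le_two_mul_natCard_projectivization_dual {m : ℕ}
    {A B : Fin m → Set (Fin n → F)} (h : CrossIntersecting A B) :
    m ≤ 2 * Nat.card (ℙ F (Dual F (Fin n → F))) := by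
  obtain ⟨hA, hB, hAB, hcross⟩ := h
  choose φ c hφA hφB using fun i => (hA i).exists_dual_of_inter_eq_empty (hB i) (hAB i)
  have hφ : ∀ i, φ i ≠ 0 := by
    intro i hφi
    obtain ⟨x, hx⟩ := (hA i).nonempty
    obtain ⟨y, hy⟩ := (hB i).nonempty
    have hcx := hφA i x hx
    have hcy := hφB i y hy
    rw [hφi, LinearMap.zero_apply] at hcx hcy
    exact one_ne_zero (by linear_combination hcy - hcx)
  simpa using Fintype.card_le_two_mul_natCard_of_lt_of_lt (fun i => mk F (φ i) (hφ i))
    fun i j k hij hjk => mk_ne_mk_of_separating hφ hφA hφB hcross hij hjk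

end FiniteField

theorem stmt16_general (q n : ℕ) (hq3 : 3 ≤ q)
    (F : Type) [Field F] [Fintype F] (hF : Fintype.card F = q) :
    (∃ A B : Fin ((q ^ n - 1) / (q - 1)) → Set (Fin n → F), CrossIntersecting A B) ∧
    (∀ m : ℕ, ∀ A B : Fin m → Set (Fin n → F), CrossIntersecting A B → m ≤ q ^ n + 1) := by
  have hcard := natCard_projectivization_dual_mul (F := F) (n := n)
  rw [Nat.card_eq_fintype_card (α := F), hF] at hcard
  refine ⟨?_, fun m A B h => ?_⟩
  · rw [← hcard, Nat.mul_div_cancel _ (by omega)]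
    exact exists_crossIntersecting_natCard_projectivization_dual
  · calc m ≤ 2 * Nat.card (ℙ F (Dual F (Fin n → F))) :=
          h.card_le_two_mul_natCard_projectivization_dual
      _ ≤ Nat.card (ℙ F (Dual F (Fin n → F))) * (q - 1) := by
          rw [mul_comm]; exact Nat.mul_le_mul_left _ (by omega)
      _ ≤ q ^ n + 1 := by omega

theorem stmt16 (q n : ℕ) (hq : IsPrimePow q) (hq3 : 3 ≤ q) (hn : 1 ≤ n)
    (F : Type) [Field F] [Fintype F] (hF : Fintype.card F = q) :
    (∃ A B : Fin ((q ^ n - 1) / (q - 1)) → Set (Fin n → F), CrossIntersecting A B) ∧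
    (∀ m : ℕ, ∀ A B : Fin m → Set (Fin n → F), CrossIntersecting A B → m ≤ q ^ n + 1) :=
  stmt16_general q n hq3 F hF
end
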